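/- For every real α with 1/2 ≤ α ≤ 1, the infimum of 2(a+b+c)+d over all kissing-rectangles configurations (a,b,c,d) for α equals 2√(6(1+α)), and it is attained at (a,b,c,d) = (√(3/(2(1+α))), √(2(1+α)/3), α·√(3/(2(1+α))), √(2(1+α)/3)). -/
import Mathlib


/-- A kissing-rectangles configuration for `α`: two rectangles `a × b` and `c × d` of
areas `1` and `α` (in either order) sharing part of a vertical edge, with `b ≥ d`. -/
def IsKissingConfig (α a b c d : ℝ) : Prop :=
  0 < a ∧ 0 < b ∧ 0 < c ∧ 0 < d ∧ d ≤ b ∧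
    ((a * b = 1 ∧ c * d = α) ∨ (a * b = α ∧ c * d = 1))

lemma kissing_lb (α p q a b c d : ℝ) (hα : 0 < 1 + α) (hpq : p + q = 1 + α)
    (hp : 0 < p) (hq : 0 < q) (hp2q : p ≤ 2 * q)
    (hb : 0 < b) (hd : 0 < d) (hdb : d ≤ b)
    (hab : a * b = p) (hcd : c * d = q) :
    2 * Real.sqrt (6 * (1 + α)) ≤ 2 * (a + b + c) + d := by
  set S := Real.sqrt (6 * (1 + α)) with hS
  have hS0 : 0 ≤ S := Real.sqrt_nonneg _
  have hS2 : S ^ 2 = 6 * (1 + α) := Real.sq_sqrt (by positivity)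
  have h1 : 2 * a * (1 + α) + 3 * p * b ≥ 2 * p * S := by
    nlinarith [sq_nonneg (3 * b - S), mul_pos hp hb, sq_nonneg b]
  have h2 : 2 * c * (1 + α) + 3 * q * d ≥ 2 * q * S := by
    nlinarith [sq_nonneg (3 * d - S), mul_pos hq hd, sq_nonneg d]
  have h3 : (2 * q - p) * (b - d) ≥ 0 :=
    mul_nonneg (by linarith) (by linarith)
  nlinarith [h1, h2, h3, hα]


/-- **Lemma 3.1, high-α case.** For `1/2 ≤ α ≤ 1` the infimum of the double bubble
perimeter `2(a+b+c)+d` over all kissing-rectangles configurations equals `2√(6(1+α))`,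
attained at `(√(3/(2(1+α))), √(2(1+α)/3), α√(3/(2(1+α))), √(2(1+α)/3))`. -/
theorem kissing_rectangles_min_high (α : ℝ) (h0 : 1 / 2 ≤ α) (h1 : α ≤ 1) :
    sInf {p : ℝ | ∃ a b c d : ℝ, IsKissingConfig α a b c d ∧ p = 2 * (a + b + c) + d} =
        2 * Real.sqrt (6 * (1 + α)) ∧
      IsKissingConfig α (Real.sqrt (3 / (2 * (1 + α)))) (Real.sqrt (2 * (1 + α) / 3))
        (α * Real.sqrt (3 / (2 * (1 + α)))) (Real.sqrt (2 * (1 + α) / 3)) ∧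
      2 * (Real.sqrt (3 / (2 * (1 + α))) + Real.sqrt (2 * (1 + α) / 3) +
          α * Real.sqrt (3 / (2 * (1 + α)))) + Real.sqrt (2 * (1 + α) / 3) =
        2 * Real.sqrt (6 * (1 + α)) := by
  have hα : 0 < 1 + α := by linarith
  have hαpos : 0 < α := by linarith
  set u := Real.sqrt (3 / (2 * (1 + α))) with hu
  set v := Real.sqrt (2 * (1 + α) / 3) with hv
  have hu0 : 0 < u := Real.sqrt_pos.2 (by positivity)
  have hv0 : 0 < v := Real.sqrt_pos.2 (by positivity)
  have huv : u * v = 1 := by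
    rw [hu, hv, ← Real.sqrt_mul (by positivity)]
    rw [show 3 / (2 * (1 + α)) * (2 * (1 + α) / 3) = 1 by field_simp]
    exact Real.sqrt_one
  have hEu : 2 * (1 + α) * u = Real.sqrt (6 * (1 + α)) := by
    rw [hu, show (6 : ℝ) * (1 + α) = (2 * (1 + α)) ^ 2 * (3 / (2 * (1 + α))) by
      field_simp; ring]
    rw [Real.sqrt_mul (by positivity), Real.sqrt_sq (by positivity)]
  have hEv : 3 * v = Real.sqrt (6 * (1 + α)) := by
    rw [hv, show (6 : ℝ) * (1 + α) = (3 : ℝ) ^ 2 * (2 * (1 + α) / 3) by ring]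
    rw [Real.sqrt_mul (by positivity), Real.sqrt_sq (by norm_num)]
  have hconf : IsKissingConfig α u v (α * u) v :=
    ⟨hu0, hv0, by positivity, hv0, le_refl _,
      Or.inl ⟨huv, by rw [mul_assoc, huv, mul_one]⟩⟩
  have hval : 2 * (u + v + α * u) + v = 2 * Real.sqrt (6 * (1 + α)) := by
    linarith [hEu, hEv]
  refine ⟨?_, hconf, hval⟩
  have hmem : 2 * Real.sqrt (6 * (1 + α)) ∈
      {p : ℝ | ∃ a b c d : ℝ, IsKissingConfig α a b c d ∧ p = 2 * (a + b + c) + d} :=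
    ⟨u, v, α * u, v, hconf, hval.symm⟩
  have hlb : ∀ x ∈ {p : ℝ | ∃ a b c d : ℝ, IsKissingConfig α a b c d ∧
      p = 2 * (a + b + c) + d}, 2 * Real.sqrt (6 * (1 + α)) ≤ x := by
    rintro x ⟨a, b, c, d, ⟨ha, hb, hc, hd, hdb, hcase⟩, rfl⟩
    rcases hcase with ⟨hab, hcd⟩ | ⟨hab, hcd⟩
    · exact kissing_lb α 1 α a b c d hα (by ring) one_pos hαpos (by linarith)
        hb hd hdb hab hcd
    · exact kissing_lb α α 1 a b c d hα (by ring) hαpos one_pos (by linarith)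
        hb hd hdb hab hcd
  exact le_antisymm (csInf_le ⟨_, hlb⟩ hmem) (le_csInf ⟨_, hmem⟩ hlb)
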